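/- Let n ≡ 1 (mod 4). Let A be the quotient of the free unital associative ℤ/2-algebra ⟨H,S,Y⟩ on three generators by the two-sided ideal generated by the elements HS + SH + 1, HY + YH, SY + YS + H^{n−1}Y², S², and H^{n+1}. Then the images in A of the monomials H^a S^ε Y^k, for 0 ≤ a ≤ n, ε ∈ {0,1}, k ≥ 0, form a basis of A as a ℤ/2-vector space. (This is the additive structure underlying the presentation of the path homology algebra ℍ_·(P_n) for n ≡ 1 (mod 4), where H, S, Y have degrees −1, 1, n respectively.) -/

import Mathlib

/-!
Spanning: the span of the monomials `H^a S^ε Y^k` contains `1` and is stable under right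
multiplication by `H`, `S`, `Y`, since `SH = HS + 1`, `YH = HY`,
`Y^k S = S Y^k + k H^{n-1} Y^{k+1}`, `S` commutes with `H^{n-1}` (`n` is odd), `S² = 0` and
`H^{n+1} = 0`.

Independence: `A` acts on `V²`, `V = 𝔽₂[y][h]/(h^{n+1})`, by
`H ↦ h`, `S ↦ [[∂, 0], [1, ∂]]`, `Y ↦ [[y, h^{n-1}y²], [0, y]]` with `∂ = ∂/∂h`, which is
well defined on `V` because `n + 1` is even. This is the action of `A` on itself by left
multiplication, written in the monomial basis: `H^a S^ε Y^k` sends `(1, 0)` to `h^a y^k` in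
the coordinate `ε`, and these vectors are visibly independent.
-/

/-- The free unital associative `ℤ/2`-algebra `⟨H, S, Y⟩` on three generators. -/
abbrev FreeHSY : Type := FreeAlgebra (ZMod 2) (Fin 3)

/-- The generator `H`. -/
noncomputable def genH : FreeHSY := FreeAlgebra.ι (ZMod 2) 0
/-- The generator `S`. -/
noncomputable def genS : FreeHSY := FreeAlgebra.ι (ZMod 2) 1
/-- The generator `Y`. -/
noncomputable def genY : FreeHSY := FreeAlgebra.ι (ZMod 2) 2

/-- The relations `HS + SH + 1 = 0`, `HY + YH = 0`, `SY + YS + H^{n−1}Y² = 0`, `S² = 0`,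
`H^{n+1} = 0` (for `n ≡ 1 (mod 4)`); quotienting by this relation is quotienting by the
two-sided ideal generated by the corresponding elements. -/
inductive pathRel (n : ℕ) : FreeHSY → FreeHSY → Prop
  | hs : pathRel n (genH * genS + genS * genH + 1) 0
  | hy : pathRel n (genH * genY + genY * genH) 0
  | sy : pathRel n (genS * genY + genY * genS + genH ^ (n - 1) * genY ^ 2) 0
  | s2 : pathRel n (genS * genS) 0
  | hpow : pathRel n (genH ^ (n + 1)) 0

/-- The quotient algebra `A = ⟨H,S,Y⟩ / (HS+SH+1, HY+YH, SY+YS+H^{n−1}Y², S², H^{n+1})`. -/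
abbrev PathAlg (n : ℕ) : Type := RingQuot (pathRel n)

open Polynomial

noncomputable section

section CharTwo

variable {R : Type*} [CommSemiring R] [CharP R 2]

theorem Polynomial.derivative_derivative_of_charTwo (p : R[X]) :
    derivative (derivative p) = 0 := by
  ext m
  have hm : (((m + 1) * (m + 2) : ℕ) : R) = 0 :=
    (CharP.cast_eq_zero_iff R 2 _).2 (Nat.even_mul_succ_self (m + 1)).two_dvd
  simp only [coeff_derivative, coeff_zero]
  push_cast at hm
  calc p.coeff (m + 1 + 1) * (↑(m + 1) + 1) * (↑m + 1)
      = p.coeff (m + 1 + 1) * ((m + 1) * (m + 2)) := by push_cast; ring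
    _ = 0 := by rw [hm, mul_zero]

theorem Polynomial.derivative_X_pow_of_even {m : ℕ} (hm : Even m) :
    derivative (X ^ m : R[X]) = 0 := by
  rw [derivative_X_pow, (CharP.cast_eq_zero_iff R 2 m).2 hm.two_dvd, C_0, zero_mul]

end CharTwo

theorem ZModModule.two_eq_zero {E : Type*} [Ring E] [Module (ZMod 2) E] : (2 : E) = 0 := by
  rw [← one_add_one_eq_two, ZModModule.add_self]

theorem Submodule.eq_top_of_mul_ι_mem {R ι A : Type*} [CommSemiring R] [Semiring A]
    [Algebra R A] {f : FreeAlgebra R ι →ₐ[R] A} (hf : Function.Surjective f)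
    {M : Submodule R A} (one_mem : 1 ∈ M)
    (mul_mem : ∀ m ∈ M, ∀ i, m * f (FreeAlgebra.ι R i) ∈ M) : M = ⊤ := by
  have key : ∀ z, ∀ m ∈ M, m * f z ∈ M := by
    intro z
    induction z using FreeAlgebra.induction with
    | grade0 r =>
      intro m hm
      rw [AlgHom.commutes, ← Algebra.commutes, ← Algebra.smul_def]
      exact M.smul_mem r hm
    | grade1 i => exact fun m hm => mul_mem m hm i
    | mul a b iha ihb => intro m hm; simpa [mul_assoc] using ihb _ (iha m hm)
    | add a b iha ihb => intro m hm; simpa [mul_add] using M.add_mem (iha m hm) (ihb m hm)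
  refine eq_top_iff.2 fun x _ => ?_
  obtain ⟨z, rfl⟩ := hf x
  simpa using key z 1 one_mem

namespace Matrix

variable {E : Type*} [Ring E]

theorem pow_fin_two_diag (a : E) (m : ℕ) : !![a, 0; 0, a] ^ m = !![a ^ m, 0; 0, a ^ m] := by
  induction m with
  | zero => rw [pow_zero, pow_zero, one_fin_two]
  | succ m ih => rw [pow_succ, ih, mul_fin_two]; simp [pow_succ]

theorem exists_pow_fin_two_upper (a b : E) (m : ℕ) :
    ∃ x, !![a, b; 0, a] ^ m = !![a ^ m, x; 0, a ^ m] := by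
  induction m with
  | zero => exact ⟨0, by rw [pow_zero, pow_zero, one_fin_two]⟩
  | succ m ih =>
    obtain ⟨x, hx⟩ := ih
    exact ⟨a ^ m * b + x * a, by rw [pow_succ, hx, mul_fin_two]; simp [pow_succ]⟩

end Matrix

namespace PathAlg

section Generators

variable (n : ℕ)

def H : PathAlg n := RingQuot.mkAlgHom (ZMod 2) (pathRel n) genH

def S : PathAlg n := RingQuot.mkAlgHom (ZMod 2) (pathRel n) genS

def Y : PathAlg n := RingQuot.mkAlgHom (ZMod 2) (pathRel n) genY

def basisFamily : Fin (n + 1) × Fin 2 × ℕ → PathAlg n := fun q =>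
  RingQuot.mkAlgHom (ZMod 2) (pathRel n) (genH ^ (q.1 : ℕ) * genS ^ (q.2.1 : ℕ) * genY ^ q.2.2)

theorem basisFamily_eq (q : Fin (n + 1) × Fin 2 × ℕ) :
    basisFamily n q = H n ^ (q.1 : ℕ) * S n ^ (q.2.1 : ℕ) * Y n ^ q.2.2 := by
  simp [basisFamily, H, S, Y]

end Generators

section Spanning

variable (n : ℕ)

theorem S_mul_H : S n * H n = H n * S n + 1 := by
  have := RingQuot.mkAlgHom_rel (ZMod 2) (pathRel.hs (n := n))
  simp only [map_add, map_mul, map_one, map_zero] at this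
  rw [← sub_eq_zero, ZModModule.sub_eq_add, ← this, H, S]
  abel

theorem commute_H_Y : Commute (H n) (Y n) := by
  have := RingQuot.mkAlgHom_rel (ZMod 2) (pathRel.hy (n := n))
  simp only [map_add, map_mul, map_zero] at this
  rw [Commute, SemiconjBy, ← sub_eq_zero, ZModModule.sub_eq_add, ← this, H, Y]

theorem Y_mul_S : Y n * S n = S n * Y n + H n ^ (n - 1) * Y n ^ 2 := by
  have := RingQuot.mkAlgHom_rel (ZMod 2) (pathRel.sy (n := n))
  simp only [map_add, map_mul, map_pow, map_zero] at this
  rw [← sub_eq_zero, ZModModule.sub_eq_add, ← this, H, S, Y]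
  abel

theorem S_mul_S : S n * S n = 0 := by
  simpa [S] using RingQuot.mkAlgHom_rel (ZMod 2) (pathRel.s2 (n := n))

theorem H_pow_succ : H n ^ (n + 1) = 0 := by
  simpa [H] using RingQuot.mkAlgHom_rel (ZMod 2) (pathRel.hpow (n := n))

variable {n}

theorem commute_S_H_pow_of_even {m : ℕ} (hm : Even m) : Commute (S n) (H n ^ m) := by
  obtain ⟨j, rfl⟩ := hm
  rw [← two_mul, pow_mul]
  refine Commute.pow_right ?_ j
  rw [Commute, SemiconjBy, sq, ← mul_assoc, S_mul_H, add_mul, one_mul, mul_assoc, S_mul_H,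
    mul_add, mul_one, ← mul_assoc, add_assoc, ZModModule.add_self, add_zero]

theorem Y_pow_mul_S (k : ℕ) :
    Y n ^ k * S n = S n * Y n ^ k + k • (H n ^ (n - 1) * Y n ^ (k + 1)) := by
  induction k with
  | zero => simp
  | succ k ih =>
    have hY : Y n ^ k * H n ^ (n - 1) = H n ^ (n - 1) * Y n ^ k :=
      ((commute_H_Y n).pow_pow _ _).symm.eq
    rw [pow_succ, mul_assoc, Y_mul_S, mul_add, ← mul_assoc, ih, ← mul_assoc, hY]
    simp only [add_mul, smul_mul_assoc, mul_assoc, ← pow_succ, ← pow_add, succ_nsmul]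
    abel

theorem monomial_mem_span (a ε k : ℕ) :
    H n ^ a * S n ^ ε * Y n ^ k ∈ Submodule.span (ZMod 2) (Set.range (basisFamily n)) := by
  by_cases ha : a ≤ n
  · by_cases hε : ε ≤ 1
    · exact Submodule.subset_span ⟨(⟨a, by omega⟩, ⟨ε, by omega⟩, k), basisFamily_eq n _⟩
    · rw [show ε = 2 + (ε - 2) by omega, pow_add, sq, S_mul_S]
      simp
  · rw [show a = n + 1 + (a - (n + 1)) by omega, pow_add, H_pow_succ]
    simp

theorem monomial_mul_H_mem_span (a ε k : ℕ) (hε : ε ≤ 1) :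
    H n ^ a * S n ^ ε * Y n ^ k * H n ∈ Submodule.span (ZMod 2) (Set.range (basisFamily n)) := by
  rw [mul_assoc, ((commute_H_Y n).pow_right k).symm.eq, ← mul_assoc, mul_assoc (H n ^ a)]
  interval_cases ε
  · simpa [← pow_succ] using monomial_mem_span (n := n) (a + 1) 0 k
  · rw [pow_one, S_mul_H, mul_add, ← mul_assoc, ← pow_succ, mul_one, add_mul]
    exact Submodule.add_mem _ (by simpa using monomial_mem_span (a + 1) 1 k)
      (by simpa using monomial_mem_span a 0 k)

theorem monomial_mul_S_mem_span (hn : Odd n) (a ε k : ℕ) :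
    H n ^ a * S n ^ ε * Y n ^ k * S n ∈ Submodule.span (ZMod 2) (Set.range (basisFamily n)) := by
  have hS : S n ^ ε * H n ^ (n - 1) = H n ^ (n - 1) * S n ^ ε :=
    ((commute_S_H_pow_of_even (Nat.Odd.sub_odd hn odd_one)).pow_left ε).eq
  rw [mul_assoc, Y_pow_mul_S, mul_add, mul_smul_comm]
  refine Submodule.add_mem _ ?_ (nsmul_mem ?_ k)
  · rw [← mul_assoc, mul_assoc (H n ^ a), ← pow_succ]
    exact monomial_mem_span _ _ _
  · rw [← mul_assoc, mul_assoc (H n ^ a), hS, ← mul_assoc, ← pow_add]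
    exact monomial_mem_span _ _ _

theorem span_basisFamily (hn : Odd n) :
    Submodule.span (ZMod 2) (Set.range (basisFamily n)) = ⊤ := by
  refine Submodule.eq_top_of_mul_ι_mem (RingQuot.mkAlgHom_surjective (ZMod 2) (pathRel n))
    (by simpa using monomial_mem_span (n := n) 0 0 0) fun m hm i => ?_
  refine (Submodule.span_le
    (p := (Submodule.span _ _).comap (LinearMap.mulRight (ZMod 2) _))).2 ?_ hm
  rintro _ ⟨⟨a, ε, k⟩, rfl⟩
  simp only [SetLike.mem_coe, Submodule.mem_comap, LinearMap.mulRight_apply, basisFamily_eq]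
  fin_cases i
  · exact monomial_mul_H_mem_span _ _ _ (Nat.lt_succ_iff.1 ε.is_lt)
  · exact monomial_mul_S_mem_span hn _ _ _
  · change _ * Y n ∈ _
    rw [mul_assoc, ← pow_succ]
    exact monomial_mem_span _ _ _

end Spanning

section MatrixModel

variable {E : Type*} [Ring E] (h d y : E) (m : ℕ)

def matH : Matrix (Fin 2) (Fin 2) E := !![h, 0; 0, h]

def matS : Matrix (Fin 2) (Fin 2) E := !![d, 0; 1, d]

def matY : Matrix (Fin 2) (Fin 2) E := !![y, h ^ m * y ^ 2; 0, y]

variable {h d y}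

theorem matH_pow_eq_zero {k : ℕ} (hk : h ^ k = 0) : matH h ^ k = 0 := by
  rw [matH, Matrix.pow_fin_two_diag, hk]
  ext i j; fin_cases i <;> fin_cases j <;> rfl

variable [Module (ZMod 2) E]

theorem matH_matS_rel (hd : d * h = h * d + 1) :
    matH h * matS d + matS d * matH h + 1 = 0 := by
  rw [matH, matS, Matrix.mul_fin_two, Matrix.mul_fin_two, Matrix.one_fin_two, hd]
  ext i j; fin_cases i <;> fin_cases j <;> simp <;> abel_nf <;> simp [ZModModule.two_eq_zero]

theorem matH_matY_rel (hy : Commute h y) : matH h * matY h y m + matY h y m * matH h = 0 := by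
  have hc : Commute h (h ^ m * y ^ 2) := (Commute.self_pow h m).mul_right (hy.pow_right 2)
  rw [matH, matY, Matrix.mul_fin_two, Matrix.mul_fin_two, hy.eq, hc.eq]
  ext i j; fin_cases i <;> fin_cases j <;> simp [ZModModule.add_self]

theorem matS_matY_rel (hy : Commute h y) (dy : Commute d y) (dh : Commute d (h ^ m)) :
    matS d * matY h y m + matY h y m * matS d + matH h ^ m * matY h y m ^ 2 = 0 := by
  have dc : Commute d (h ^ m * y ^ 2) := dh.mul_right (dy.pow_right 2)
  have yc : Commute y (h ^ m * y ^ 2) :=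
    (hy.pow_left m).symm.mul_right ((Commute.refl y).pow_right 2)
  rw [matH, matS, matY, Matrix.pow_fin_two_diag, sq !![y, _; 0, y], Matrix.mul_fin_two,
    Matrix.mul_fin_two, Matrix.mul_fin_two, Matrix.mul_fin_two, dy.eq, dc.eq, yc.eq]
  ext i j; fin_cases i <;> fin_cases j <;> simp [sq] <;> abel_nf <;> simp [ZModModule.two_eq_zero]

theorem matS_mul_self (dd : d * d = 0) : matS d * matS d = 0 := by
  rw [matS, Matrix.mul_fin_two, dd]
  ext i j; fin_cases i <;> fin_cases j <;> simp [ZModModule.add_self]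

end MatrixModel

section TruncatedPolynomials

variable (n : ℕ)

/-- In `(ZMod 2)[X][X]` the outer variable `X` plays the role of `h` and `C X` that of `y`. -/
def truncSubmodule : Submodule (ZMod 2) (ZMod 2)[X][X] :=
  (Ideal.span {X ^ (n + 1)}).restrictScalars (ZMod 2)

abbrev TruncPoly : Type := (ZMod 2)[X][X] ⧸ truncSubmodule n

abbrev TruncEnd : Type := Module.End (ZMod 2) (TruncPoly n)

def truncMul : (ZMod 2)[X][X] →+* TruncEnd n where
  toFun c := (truncSubmodule n).mapQ _ (LinearMap.mulLeft (ZMod 2) c)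
    fun _ hp => Ideal.mul_mem_left _ c hp
  map_one' := Submodule.linearMap_qext _ <| by ext; simp
  map_mul' _ _ := Submodule.linearMap_qext _ <| by
    ext; exact congrArg Submodule.Quotient.mk (mul_assoc _ _ _)
  map_zero' := Submodule.linearMap_qext _ <| by ext; simp
  map_add' _ _ := Submodule.linearMap_qext _ <| by
    ext; exact congrArg Submodule.Quotient.mk (add_mul _ _ _)

variable {n}

@[simp] theorem truncMul_mk (c p : (ZMod 2)[X][X]) :
    truncMul n c (Submodule.Quotient.mk p) = Submodule.Quotient.mk (c * p) := rfl

theorem truncMul_X_pow_succ : truncMul n (X ^ (n + 1)) = 0 :=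
  Submodule.linearMap_qext _ <| by
    ext p
    simp only [LinearMap.coe_comp, Function.comp_apply, Submodule.mkQ_apply, truncMul_mk,
      LinearMap.zero_apply, Submodule.Quotient.mk_eq_zero]
    exact Ideal.mul_mem_right p _ (Ideal.subset_span rfl)

def truncDeriv (hn : Odd n) : TruncEnd n :=
  (truncSubmodule n).mapQ _ (derivative.restrictScalars (ZMod 2)) fun p hp => by
    obtain ⟨q, rfl⟩ := Ideal.mem_span_singleton'.1 hp
    simp only [Submodule.mem_comap, LinearMap.coe_restrictScalars, derivative_mul,
      derivative_X_pow_of_even hn.add_one, mul_zero, add_zero]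
    exact Ideal.mul_mem_left _ _ (Ideal.mem_span_singleton_self _)

variable (n) in
def truncCoeff : TruncPoly n →ₗ[ZMod 2] (Fin (n + 1) × ℕ → ZMod 2) :=
  (truncSubmodule n).liftQ (LinearMap.pi fun q => (lcoeff (ZMod 2) q.2).comp
    ((lcoeff (ZMod 2)[X] (q.1 : ℕ)).restrictScalars (ZMod 2))) fun p hp => by
    obtain ⟨r, rfl⟩ := Ideal.mem_span_singleton'.1 hp
    ext q
    simp [mul_comm r, coeff_X_pow_mul', not_lt.2 q.1.is_le]

theorem truncCoeff_mk (a : Fin (n + 1)) (k : ℕ) (q : Fin (n + 1) × ℕ) :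
    truncCoeff n (Submodule.Quotient.mk (X ^ (a : ℕ) * C (X ^ k))) q =
      if q = (a, k) then 1 else 0 := by
  simp only [truncCoeff, Submodule.liftQ_apply, LinearMap.pi_apply, LinearMap.comp_apply,
    LinearMap.coe_restrictScalars, lcoeff_apply, mul_comm (X ^ _), coeff_C_mul_X_pow, Fin.val_inj]
  split_ifs <;> simp_all [coeff_X_pow, Prod.ext_iff]

variable (hn : Odd n)

@[simp] theorem truncDeriv_mk (p : (ZMod 2)[X][X]) :
    truncDeriv hn (Submodule.Quotient.mk p) = Submodule.Quotient.mk (derivative p) := rfl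

theorem truncDeriv_mul_truncMul (c : (ZMod 2)[X][X]) :
    truncDeriv hn * truncMul n c = truncMul n c * truncDeriv hn + truncMul n (derivative c) :=
  Submodule.linearMap_qext _ <| by ext p; simp [derivative_mul, add_comm]

theorem commute_truncDeriv_truncMul {c : (ZMod 2)[X][X]} (hc : derivative c = 0) :
    Commute (truncDeriv hn) (truncMul n c) := by
  rw [Commute, SemiconjBy, truncDeriv_mul_truncMul, hc, map_zero, add_zero]

theorem truncDeriv_mul_self : truncDeriv hn * truncDeriv hn = 0 :=
  Submodule.linearMap_qext _ <| by ext p; simp [derivative_derivative_of_charTwo]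

end TruncatedPolynomials

section Representation

variable {n : ℕ} (hn : Odd n)

def repGen : Fin 3 → Matrix (Fin 2) (Fin 2) (TruncEnd n) :=
  ![matH (truncMul n X), matS (truncDeriv hn), matY (truncMul n X) (truncMul n (C X)) (n - 1)]

theorem lift_repGen_respects_pathRel ⦃a b : FreeHSY⦄ (hab : pathRel n a b) :
    FreeAlgebra.lift (ZMod 2) (repGen hn) a = FreeAlgebra.lift (ZMod 2) (repGen hn) b := by
  have hy : Commute (truncMul n X) (truncMul n (C X)) := (Commute.all _ _).map _
  cases hab <;> simp only [genH, genS, genY, repGen, map_add, map_mul, map_pow, map_one,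
    map_zero, FreeAlgebra.lift_ι_apply, Matrix.cons_val_zero, Matrix.cons_val_one,
    Matrix.cons_val_two, Matrix.head_cons, Matrix.tail_cons]
  case hs => exact matH_matS_rel (by rw [truncDeriv_mul_truncMul, derivative_X, map_one])
  case hy => exact matH_matY_rel _ hy
  case sy =>
    refine matS_matY_rel _ hy (commute_truncDeriv_truncMul hn derivative_C) ?_
    rw [← map_pow]
    exact commute_truncDeriv_truncMul hn (derivative_X_pow_of_even (Nat.Odd.sub_odd hn odd_one))
  case s2 => exact matS_mul_self (truncDeriv_mul_self hn)
  case hpow => exact matH_pow_eq_zero (by rw [← map_pow, truncMul_X_pow_succ])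

def rep : PathAlg n →ₐ[ZMod 2] Matrix (Fin 2) (Fin 2) (TruncEnd n) :=
  RingQuot.liftAlgHom (ZMod 2) ⟨_, lift_repGen_respects_pathRel hn⟩

theorem rep_basisFamily (q : Fin (n + 1) × Fin 2 × ℕ) :
    rep hn (basisFamily n q) =
      matH (truncMul n X) ^ (q.1 : ℕ) * matS (truncDeriv hn) ^ (q.2.1 : ℕ) *
      matY (truncMul n X) (truncMul n (C X)) (n - 1) ^ q.2.2 := by
  simp [rep, repGen, basisFamily, genH, genS, genY]

theorem rep_basisFamily_apply_one (q : Fin (n + 1) × Fin 2 × ℕ) (i : Fin 2) :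
    rep hn (basisFamily n q) i 0 (Submodule.Quotient.mk 1) =
      if i = q.2.1 then Submodule.Quotient.mk (X ^ (q.1 : ℕ) * C (X ^ q.2.2)) else 0 := by
  obtain ⟨a, ε, k⟩ := q
  obtain ⟨x, hx⟩ := Matrix.exists_pow_fin_two_upper (truncMul n (C X))
    (truncMul n X ^ (n - 1) * truncMul n (C X) ^ 2) k
  rw [rep_basisFamily, matY, hx, matH, Matrix.pow_fin_two_diag, matS]
  fin_cases ε <;> fin_cases i <;> simp [← map_pow]

variable (n) in
/-- `coord n M (a, ε, k)` is the coefficient of `h^a y^k` in `M ε 0` applied to `1`. -/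
def coord :
    Matrix (Fin 2) (Fin 2) (TruncEnd n) →ₗ[ZMod 2] (Fin (n + 1) × Fin 2 × ℕ → ZMod 2) :=
  LinearMap.pi fun q => LinearMap.proj (q.1, q.2.2) ∘ₗ truncCoeff n ∘ₗ
    LinearMap.applyₗ (Submodule.Quotient.mk 1) ∘ₗ Matrix.entryLinearMap (ZMod 2) _ q.2.1 0

theorem coord_rep_basisFamily (p : Fin (n + 1) × Fin 2 × ℕ) :
    coord n (rep hn (basisFamily n p)) = Pi.single p 1 := by
  ext q
  simp only [coord, LinearMap.pi_apply, LinearMap.comp_apply, Matrix.entryLinearMap_apply,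
    LinearMap.applyₗ_apply_apply, rep_basisFamily_apply_one, LinearMap.proj_apply]
  split_ifs with h
  · rw [truncCoeff_mk]
    simp [Pi.single_apply, Prod.ext_iff, h, eq_comm]
  · simp [Prod.ext_iff, Ne.symm h]

end Representation

theorem linearIndependent_basisFamily {n : ℕ} (hn : Odd n) :
    LinearIndependent (ZMod 2) (basisFamily n) := by
  refine LinearIndependent.of_comp (coord n ∘ₗ (rep hn).toLinearMap) ?_
  convert Pi.linearIndependent_single_one (Fin (n + 1) × Fin 2 × ℕ) (ZMod 2) with p
  exact coord_rep_basisFamily hn p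

end PathAlg

end

/-- For `n ≡ 1 (mod 4)`, the images in `A` of the monomials `H^a S^ε Y^k`, for
`0 ≤ a ≤ n`, `ε ∈ {0,1}`, `k ≥ 0`, form a basis of `A` as a `ℤ/2`-vector space. -/
theorem stmt_14 (n : ℕ) (hn : n % 4 = 1) :
    LinearIndependent (ZMod 2)
      (fun q : Fin (n + 1) × Fin 2 × ℕ =>
        RingQuot.mkAlgHom (ZMod 2) (pathRel n)
          (genH ^ (q.1 : ℕ) * genS ^ (q.2.1 : ℕ) * genY ^ q.2.2)) ∧
    Submodule.span (ZMod 2)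
      (Set.range (fun q : Fin (n + 1) × Fin 2 × ℕ =>
        RingQuot.mkAlgHom (ZMod 2) (pathRel n)
          (genH ^ (q.1 : ℕ) * genS ^ (q.2.1 : ℕ) * genY ^ q.2.2))) = ⊤ := by
  have hodd : Odd n := Nat.odd_iff.2 (by omega)
  exact ⟨PathAlg.linearIndependent_basisFamily hodd, PathAlg.span_basisFamily hodd⟩
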